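/- arXiv:2203.08660 — 3 statements merged into one kernel-verified Lean document; each statement's English description precedes it below -/
import Mathlib

section
/- Let f : [R₀, ∞) → ℝ be a nonnegative C¹ function satisfying f(R) ≤ C·R for all R ≥ R₀ and the differential inequality f(R) ≤ (R/β)·f'(R) + F(R) for all R ≥ R₀, where β > 1 and F : [R₀, ∞) → ℝ satisfies F(R)/log R → 0 as R → ∞. Then f(R)/log R → 0 as R → ∞. -/
/-!
Fix `ε > 0`. Once `F ≤ ε log R`, the function `u = f - ε log R - ε / β` satisfies
`β u ≤ R u'`, so `u R · R^(-β)` is nondecreasing. Since `u ≤ f ≤ C R` and `β > 1`, this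
function tends to `0` from below along `R → ∞`, hence `u ≤ 0`, that is
`f ≤ ε log R + ε / β` for all large `R`. As `f ≥ 0` and `ε` is arbitrary, `f = o(log R)`.
-/

open Real Filter Set Asymptotics

theorem monotoneOn_mul_rpow_neg {u u' : ℝ → ℝ} {a β : ℝ} (ha : 0 < a)
    (hu : ∀ x ≥ a, HasDerivAt u (u' x) x) (h : ∀ x ≥ a, β * u x ≤ x * u' x) :
    MonotoneOn (fun x => u x * x ^ (-β)) (Ici a) := by
  have hderiv : ∀ x ≥ a, HasDerivAt (fun x => u x * x ^ (-β))
      ((x * u' x - β * u x) * x ^ (-β - 1)) x := by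
    intro x hx
    have hx0 : x ≠ 0 := (ha.trans_le hx).ne'
    refine ((hu x hx).mul (hasDerivAt_rpow_const (p := -β) (Or.inl hx0))).congr_deriv ?_
    rw [rpow_sub_one hx0]
    field_simp
    ring
  refine monotoneOn_of_hasDerivWithinAt_nonneg (convex_Ici a)
    (fun x hx => (hderiv x hx).continuousAt.continuousWithinAt)
    (fun x hx => (hderiv x (interior_subset hx)).hasDerivWithinAt) fun x hx => ?_
  have hx : a ≤ x := interior_subset hx
  exact mul_nonneg (sub_nonneg.2 (h x hx)) (rpow_nonneg (ha.le.trans hx) _)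

theorem nonpos_of_mul_le_mul_deriv {u u' : ℝ → ℝ} {a β C : ℝ} (ha : 0 < a) (hβ : 1 < β)
    (hu : ∀ x ≥ a, HasDerivAt u (u' x) x) (h : ∀ x ≥ a, β * u x ≤ x * u' x)
    (hlin : ∀ x ≥ a, u x ≤ C * x) : ∀ x ≥ a, u x ≤ 0 := by
  intro x hx
  have hmono := monotoneOn_mul_rpow_neg ha hu h
  have hbound : ∀ S ≥ x, u x * x ^ (-β) ≤ C * S ^ (-(β - 1)) := by
    intro S hS
    have hSa : a ≤ S := hx.trans hS
    have hS0 : 0 < S := ha.trans_le hSa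
    calc u x * x ^ (-β) ≤ u S * S ^ (-β) := hmono hx hSa hS
      _ ≤ C * S * S ^ (-β) := mul_le_mul_of_nonneg_right (hlin S hSa) (rpow_nonneg hS0.le _)
      _ = C * S ^ (-(β - 1)) := by
        rw [neg_sub', sub_neg_eq_add, rpow_add_one hS0.ne']
        ring
  have hlim : Tendsto (fun S => C * S ^ (-(β - 1))) atTop (nhds 0) := by
    simpa using (tendsto_rpow_neg_atTop (sub_pos.2 hβ)).const_mul C
  have hφ : u x * x ^ (-β) ≤ 0 := ge_of_tendsto hlim (eventually_atTop.2 ⟨x, hbound⟩)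
  exact nonpos_of_mul_nonpos_left hφ (rpow_pos_of_pos (ha.trans_le hx) _)

theorem eventually_le_mul_log_add {f F : ℝ → ℝ} {R₀ C β ε : ℝ} (hβ : 1 < β) (hε : 0 < ε)
    (hfd : ∀ R ≥ R₀, DifferentiableAt ℝ f R) (hlin : ∀ R ≥ R₀, f R ≤ C * R)
    (hineq : ∀ R ≥ R₀, f R ≤ (R / β) * deriv f R + F R)
    (hFε : ∀ᶠ R in atTop, F R ≤ ε * log R) :
    ∀ᶠ R in atTop, f R ≤ ε * log R + ε / β := by
  obtain ⟨R₁, hR₁⟩ := eventually_atTop.1 hFε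
  set a := max R₀ (max R₁ 1)
  have haR₀ : R₀ ≤ a := le_max_left _ _
  have haR₁ : R₁ ≤ a := (le_max_left _ _).trans (le_max_right _ _)
  have ha1 : 1 ≤ a := (le_max_right _ _).trans (le_max_right _ _)
  have hβ0 : 0 < β := one_pos.trans hβ
  have hu : ∀ x ≥ a, HasDerivAt (fun R => f R - ε * log R - ε / β) (deriv f x - ε * x⁻¹) x :=
    fun x hx => (((hfd x (haR₀.trans hx)).hasDerivAt.sub
      ((hasDerivAt_log (by linarith)).const_mul ε)).sub_const _)
  have hcomp : ∀ x ≥ a, β * (f x - ε * log x - ε / β) ≤ x * (deriv f x - ε * x⁻¹) := by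
    intro x hx
    have hx0 : 0 < x := by linarith
    have h1 : β * f x ≤ x * deriv f x + β * F x := by
      have := mul_le_mul_of_nonneg_left (hineq x (haR₀.trans hx)) hβ0.le
      rwa [mul_add, ← mul_assoc, mul_div_cancel₀ _ hβ0.ne'] at this
    have h2 := mul_le_mul_of_nonneg_left (hR₁ x (haR₁.trans hx)) hβ0.le
    have h3 : β * (ε / β) = x * (ε * x⁻¹) := by field_simp
    linarith [mul_sub β (f x - ε * log x) (ε / β), mul_sub x (deriv f x) (ε * x⁻¹)]
  have hlin' : ∀ x ≥ a, f x - ε * log x - ε / β ≤ C * x := by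
    intro x hx
    have hlog : 0 ≤ ε * log x := mul_nonneg hε.le (log_nonneg (ha1.trans hx))
    have hεβ : 0 ≤ ε / β := div_nonneg hε.le hβ0.le
    linarith [hlin x (haR₀.trans hx)]
  filter_upwards [eventually_ge_atTop a] with x hx
  linarith [nonpos_of_mul_le_mul_deriv (by linarith) hβ hu hcomp hlin' x hx]

theorem stmt4_general (R₀ C β : ℝ) (hβ : 1 < β)
    (f F : ℝ → ℝ)
    (hf0 : ∀ R ≥ R₀, 0 ≤ f R)
    (hfd : ∀ R ≥ R₀, DifferentiableAt ℝ f R)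
    (hlin : ∀ R ≥ R₀, f R ≤ C * R)
    (hineq : ∀ R ≥ R₀, f R ≤ (R / β) * deriv f R + F R)
    (hF : Tendsto (fun R => F R / Real.log R) atTop (nhds 0)) :
    Tendsto (fun R => f R / Real.log R) atTop (nhds 0) := by
  have hlog_ne : ∀ᶠ R in atTop, Real.log R = 0 → F R = 0 := by
    filter_upwards [eventually_gt_atTop 1] with R hR hlog
    exact absurd hlog (log_pos hR).ne'
  have hFo : F =o[atTop] Real.log := (isLittleO_iff_tendsto' hlog_ne).2 hF
  refine IsLittleO.tendsto_div_nhds_zero (IsLittleO.of_bound fun ε hε => ?_)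
  have hFε : ∀ᶠ R in atTop, F R ≤ ε / 2 * Real.log R := by
    filter_upwards [hFo.bound (half_pos hε), eventually_ge_atTop 1] with R hR hR1
    rw [Real.norm_eq_abs, Real.norm_of_nonneg (log_nonneg hR1)] at hR
    exact (le_abs_self _).trans hR
  filter_upwards [eventually_le_mul_log_add hβ (half_pos hε) hfd hlin hineq hFε,
    eventually_ge_atTop R₀, eventually_ge_atTop (exp 1)] with R hR hRR₀ hRe
  have hlog1 : 1 ≤ Real.log R := by simpa using log_le_log (exp_pos 1) hRe
  have hεβ : ε / 2 / β ≤ ε / 2 := div_le_self (half_pos hε).le hβ.le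
  rw [Real.norm_of_nonneg (hf0 R hRR₀), Real.norm_of_nonneg (by linarith)]
  nlinarith

theorem stmt4 (R₀ C β : ℝ) (hR₀ : 1 < R₀) (hC : 0 < C) (hβ : 1 < β)
    (f F : ℝ → ℝ)
    (hf0 : ∀ R ≥ R₀, 0 ≤ f R)
    (hfd : ∀ R ≥ R₀, DifferentiableAt ℝ f R)
    (hfd' : ContinuousOn (deriv f) (Ici R₀))
    (hlin : ∀ R ≥ R₀, f R ≤ C * R)
    (hineq : ∀ R ≥ R₀, f R ≤ (R / β) * deriv f R + F R)
    (hF : Tendsto (fun R => F R / Real.log R) atTop (nhds 0)) :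
    Tendsto (fun R => f R / Real.log R) atTop (nhds 0) :=
  stmt4_general R₀ C β hβ f F hf0 hfd hlin hineq hF
end

section
/- Let g : [R₁, ∞) → ℝ be continuous, ψ-measurable functions such that for every μ > 0 there exists R(μ) with α(R)(g(R) - μ) ≤ g'(R) for all R > R(μ), where α(R) ≥ β̃/R for some β̃ > 1 and R large, and g(R) ≤ C·R/log R for all R. Then g(R) → 0 as R → ∞, provided g ≥ 0. -/
/-!
Fix `μ > 0` and suppose `g S > μ` at some large `S`. Where `g > μ` the inequality gives
`g' ≥ (β'/R)(g - μ)`, so `g` stays above the fence `μ + c R^γ` (`c > 0`, `1 < γ < β'`)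
for all `R ≥ S`. Such superlinear growth is incompatible with `g ≤ C R / log R ≤ C R`; hence
eventually `g ≤ μ`, and with `g ≥ 0` this gives `g → 0`.
-/

open Real Filter Set

theorem exists_rpow_le_of_div_mul_sub_le_deriv {g : ℝ → ℝ} {S μ β γ : ℝ} (hS : 0 < S)
    (hγβ : γ < β) (hgS : μ < g S) (hd : ∀ x ≥ S, DifferentiableAt ℝ g x)
    (hg : ∀ x ≥ S, μ < g x → β / x * (g x - μ) ≤ deriv g x) :
    ∃ c > 0, ∀ x ≥ S, μ + c * x ^ γ ≤ g x := by
  set c := (g S - μ) / S ^ γ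
  have hc : 0 < c := div_pos (sub_pos.2 hgS) (rpow_pos_of_pos hS γ)
  have hfence : ∀ x > 0, HasDerivAt (fun x => μ + c * x ^ γ) (c * (γ * x ^ (γ - 1))) x :=
    fun x hx => ((hasDerivAt_rpow_const (Or.inl hx.ne')).const_mul c).const_add μ
  refine ⟨c, hc, fun b hb => ?_⟩
  -- the fence `μ + c x ^ γ` grows strictly slower than `g` wherever the two meet, as `γ < β`
  refine image_le_of_deriv_right_lt_deriv_boundary' (f := fun x => μ + c * x ^ γ)
    (fun x hx => (hfence x (hS.trans_le hx.1)).continuousAt.continuousWithinAt)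
    (fun x hx => (hfence x (hS.trans_le hx.1)).hasDerivWithinAt) ?_
    (fun x hx => (hd x hx.1).continuousAt.continuousWithinAt)
    (fun x hx => (hd x hx.1).hasDerivAt.hasDerivWithinAt) (fun x hx hx_eq => ?_) ⟨hb, le_rfl⟩
  · simp only [c, div_mul_cancel₀ _ (rpow_pos_of_pos hS γ).ne', add_sub_cancel, le_refl]
  · have hx0 : 0 < x := hS.trans_le hx.1
    have hpos : 0 < c * x ^ γ := mul_pos hc (rpow_pos_of_pos hx0 γ)
    calc c * (γ * x ^ (γ - 1)) = γ / x * (c * x ^ γ) := by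
          rw [rpow_sub_one hx0.ne']; field_simp
      _ < β / x * (c * x ^ γ) := by gcongr
      _ = β / x * (g x - μ) := by rw [← hx_eq, add_sub_cancel_left]
      _ ≤ deriv g x := hg x hx.1 (by linarith)

theorem tendsto_mul_rpow_sub_mul_atTop {c γ : ℝ} (hc : 0 < c) (hγ : 1 < γ) (K : ℝ) :
    Tendsto (fun x : ℝ => c * x ^ γ - K * x) atTop atTop := by
  have h : Tendsto (fun x : ℝ => x * (c * x ^ (γ - 1) - K)) atTop atTop :=
    tendsto_id.atTop_mul_atTop₀ <| tendsto_atTop_add_const_right _ _ <|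
      (tendsto_rpow_atTop (sub_pos.2 hγ)).const_mul_atTop hc
  refine h.congr' ?_
  filter_upwards [eventually_gt_atTop 0] with x hx
  rw [rpow_sub_one hx.ne']
  field_simp

theorem eventually_mul_div_log_le_mul {C : ℝ} (hC : 0 ≤ C) :
    ∀ᶠ x in atTop, C * x / log x ≤ C * x := by
  filter_upwards [eventually_ge_atTop (exp 1)] with x hx
  have hlog : 1 ≤ log x := (le_log_iff_exp_le ((exp_pos 1).trans_le hx)).2 hx
  exact div_le_self (mul_nonneg hC ((exp_pos 1).le.trans hx)) hlog

theorem eventually_le_of_mul_sub_le_deriv {g α : ℝ → ℝ} {β K μ : ℝ} (hβ : 1 < β)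
    (hd : ∀ᶠ x in atTop, DifferentiableAt ℝ g x) (hα : ∀ᶠ x in atTop, β / x ≤ α x)
    (hK : ∀ᶠ x in atTop, g x ≤ K * x)
    (hμ : ∀ᶠ x in atTop, α x * (g x - μ) ≤ deriv g x) :
    ∀ᶠ x in atTop, g x ≤ μ := by
  by_contra hfreq
  rw [not_eventually] at hfreq
  have hlate : ∀ᶠ S in atTop, 0 < S ∧ ∀ x ≥ S,
      DifferentiableAt ℝ g x ∧ β / x ≤ α x ∧ α x * (g x - μ) ≤ deriv g x :=
    (eventually_gt_atTop 0).and (eventually_forall_ge_atTop.2 (hd.and (hα.and hμ)))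
  obtain ⟨S, hgS, hS, hS_ge⟩ := (hfreq.and_eventually hlate).exists
  obtain ⟨c, hc, hlow⟩ := exists_rpow_le_of_div_mul_sub_le_deriv (γ := (1 + β) / 2) hS
    (by linarith) (not_le.1 hgS) (fun x hx => (hS_ge x hx).1) fun x hx hgx =>
      (mul_le_mul_of_nonneg_right (hS_ge x hx).2.1 (sub_pos.2 hgx).le).trans (hS_ge x hx).2.2
  have hbig := (tendsto_mul_rpow_sub_mul_atTop (γ := (1 + β) / 2) hc (by linarith) K
    ).eventually_gt_atTop (-μ)
  obtain ⟨x, hxS, hxK, hx_big⟩ := ((eventually_ge_atTop S).and (hK.and hbig)).exists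
  linarith [hlow x hxS]

theorem stmt6_general (R₁ β' C : ℝ) (hβ : 1 < β') (hC : 0 < C)
    (g α : ℝ → ℝ)
    (hg0 : ∀ R ≥ R₁, 0 ≤ g R)
    (hgd : ∀ R ≥ R₁, DifferentiableAt ℝ g R)
    (hα : ∃ R₂ ≥ R₁, ∀ R ≥ R₂, β' / R ≤ α R)
    (hgb : ∀ R ≥ R₁, g R ≤ C * R / Real.log R)
    (hμ : ∀ μ > 0, ∃ Rμ ≥ R₁, ∀ R > Rμ, α R * (g R - μ) ≤ deriv g R) :
    Tendsto g atTop (nhds 0) := by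
  obtain ⟨R₂, -, hR₂⟩ := hα
  have hlin : ∀ᶠ R in atTop, g R ≤ C * R := by
    filter_upwards [eventually_ge_atTop R₁, eventually_mul_div_log_le_mul hC.le] with R hR hlog
    exact (hgb R hR).trans hlog
  have hsmall : ∀ μ > 0, ∀ᶠ R in atTop, g R ≤ μ := fun μ hμpos => by
    obtain ⟨Rμ, -, hRμ⟩ := hμ μ hμpos
    exact eventually_le_of_mul_sub_le_deriv hβ ((eventually_ge_atTop R₁).mono hgd)
      ((eventually_ge_atTop R₂).mono hR₂) hlin ((eventually_gt_atTop Rμ).mono hRμ)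
  refine tendsto_order.2 ⟨fun a ha => ?_, fun a ha => ?_⟩
  · filter_upwards [eventually_ge_atTop R₁] with R hR using ha.trans_le (hg0 R hR)
  · filter_upwards [hsmall (a / 2) (half_pos ha)] with R hR using hR.trans_lt (half_lt_self ha)

theorem stmt6 (R₁ β' C : ℝ) (hR₁ : 1 < R₁) (hβ : 1 < β') (hC : 0 < C)
    (g α : ℝ → ℝ)
    (hg0 : ∀ R ≥ R₁, 0 ≤ g R)
    (hgd : ∀ R ≥ R₁, DifferentiableAt ℝ g R)
    (hgc : ContinuousOn (deriv g) (Ici R₁))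
    (hαc : ContinuousOn α (Ici R₁))
    (hα : ∃ R₂ ≥ R₁, ∀ R ≥ R₂, β' / R ≤ α R)
    (hgb : ∀ R ≥ R₁, g R ≤ C * R / Real.log R)
    (hμ : ∀ μ > 0, ∃ Rμ ≥ R₁, ∀ R > Rμ, α R * (g R - μ) ≤ deriv g R) :
    Tendsto g atTop (nhds 0) :=
  stmt6_general R₁ β' C hβ hC g α hg0 hgd hα hgb hμ
end

section
/- Let u : ℝ² → ℝ² be a smooth solution of -Δu = u·j(1-|u|²) on the ball B_r, where j : ℝ → ℝ is continuous with antiderivative J (J' = j). Then the Pohozaev identity holds: ∫_{S_r} |∂u/∂ν|² dσ + (2/r)∫_{B_r} J(1-|u|²) dx = ∫_{S_r} |∂u/∂τ|² dσ + ∫_{S_r} J(1-|u|²) dσ, where ν and τ denote the outer normal and tangential directions on the circle S_r of radius r. -/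
open Real MeasureTheory Filter Set

noncomputable section

abbrev E2 := EuclideanSpace ℝ (Fin 2)

def bvec (i : Fin 2) : E2 := EuclideanSpace.single i 1

def pd (i : Fin 2) (f : E2 → ℝ) (x : E2) : ℝ := fderiv ℝ f x (bvec i)

def lap (f : E2 → ℝ) (x : E2) : ℝ := ∑ i, pd i (fun y => pd i f y) x

def gradsq (u : E2 → E2) (x : E2) : ℝ := ∑ i, ∑ k, (pd i (fun y => u y k) x)^2

def cpt (R θ : ℝ) : E2 := WithLp.toLp 2 ![R * Real.cos θ, R * Real.sin θ]

def tv (θ : ℝ) : E2 := WithLp.toLp 2 ![-Real.sin θ, Real.cos θ]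

def pdv (i : Fin 2) (u : E2 → E2) (x : E2) : E2 := WithLp.toLp 2 (fun k => pd i (fun z => u z k) x)

def wedge (a b : E2) : ℝ := a 0 * b 1 - a 1 * b 0

/-
Multiplying the equation by `x · ∇u` shows that the Pohozaev field
`Vᵢ = 2 ∑ₖ (x · ∇uₖ) ∂ᵢuₖ - xᵢ (|∇u|² + J(1 - |u|²))` has divergence `-2 J(1 - |u|²)`.
On `S_r` one has `V · x = r² (|∂_ν u|² - |∂_τ u|² - J(1 - |u|²))`, so the identity is the
divergence theorem on `B_r` for `V`. The latter is proved in polar coordinates, where the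
angular part of the divergence integrates to zero by periodicity.
-/

lemma eq_smul_bvec_add_smul_bvec (v : E2) : v = v 0 • bvec 0 + v 1 • bvec 1 := by
  ext l
  fin_cases l <;> simp [bvec]

lemma fderiv_apply_eq_pd (f : E2 → ℝ) (x v : E2) :
    fderiv ℝ f x v = v 0 * pd 0 f x + v 1 * pd 1 f x := by
  conv_lhs => rw [eq_smul_bvec_add_smul_bvec v]
  simp [pd]

lemma norm_sq_eq_E2 (v : E2) : ‖v‖ ^ 2 = v 0 ^ 2 + v 1 ^ 2 := by
  simp [EuclideanSpace.norm_sq_eq, Fin.sum_univ_two]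

@[simp] lemma cpt_apply_zero (R θ : ℝ) : cpt R θ 0 = R * cos θ := by simp [cpt]
@[simp] lemma cpt_apply_one (R θ : ℝ) : cpt R θ 1 = R * sin θ := by simp [cpt]
@[simp] lemma tv_apply_zero (θ : ℝ) : tv θ 0 = -sin θ := by simp [tv]
@[simp] lemma tv_apply_one (θ : ℝ) : tv θ 1 = cos θ := by simp [tv]

lemma cpt_eq_smul_bvec (R θ : ℝ) : cpt R θ = (R * cos θ) • bvec 0 + (R * sin θ) • bvec 1 := by
  simpa using eq_smul_bvec_add_smul_bvec (cpt R θ)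

lemma tv_eq_smul_bvec (θ : ℝ) : tv θ = (-sin θ) • bvec 0 + cos θ • bvec 1 := by
  simpa using eq_smul_bvec_add_smul_bvec (tv θ)

lemma norm_cpt (R θ : ℝ) : ‖cpt R θ‖ = |R| := by
  rw [← sqrt_sq (norm_nonneg _), norm_sq_eq_E2, ← sqrt_sq_eq_abs]
  congr 1
  simp only [cpt_apply_zero, cpt_apply_one]
  linear_combination R ^ 2 * cos_sq_add_sin_sq θ

lemma cpt_add_two_pi (R θ : ℝ) : cpt R (θ + 2 * π) = cpt R θ := by
  simp [cpt]

lemma cpt_two_pi (R : ℝ) : cpt R (2 * π) = cpt R 0 := by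
  simpa using cpt_add_two_pi R 0

@[fun_prop]
lemma Continuous.cpt {X : Type*} [TopologicalSpace X] {R θ : X → ℝ} (hR : Continuous R)
    (hθ : Continuous θ) : Continuous fun x => cpt (R x) (θ x) := by
  simp_rw [cpt_eq_smul_bvec]
  fun_prop

@[fun_prop]
lemma continuous_tv : Continuous tv := by
  simp_rw [funext tv_eq_smul_bvec]
  fun_prop

lemma hasDerivAt_cpt_radius (R θ : ℝ) : HasDerivAt (fun R => cpt R θ) (cpt 1 θ) R := by
  simp_rw [cpt_eq_smul_bvec]
  simpa using ((hasDerivAt_mul_const (cos θ)).smul_const (bvec 0)).fun_add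
    ((hasDerivAt_mul_const (sin θ)).smul_const (bvec 1))

lemma hasDerivAt_cpt_angle (R θ : ℝ) : HasDerivAt (cpt R) (R • tv θ) θ := by
  simp_rw [funext (cpt_eq_smul_bvec R), tv_eq_smul_bvec, smul_add, smul_smul]
  simpa [mul_neg] using (((hasDerivAt_cos θ).const_mul R).smul_const (bvec 0)).fun_add
    (((hasDerivAt_sin θ).const_mul R).smul_const (bvec 1))

section PartialDerivatives

variable {f g : E2 → ℝ} {x : E2}

lemma pd_const (c : ℝ) (i : Fin 2) (x : E2) : pd i (fun _ => c) x = 0 := by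
  simp [pd]

@[fun_prop]
lemma differentiable_coord (l : Fin 2) : Differentiable ℝ fun y : E2 => y l := fun y =>
  (PiLp.hasFDerivAt_apply 2 y l).differentiableAt

lemma pd_coord (l i : Fin 2) (x : E2) : pd i (fun y : E2 => y l) x = if l = i then 1 else 0 := by
  simp [pd, (PiLp.hasFDerivAt_apply 2 x l).fderiv, bvec]

lemma pd_add (hf : DifferentiableAt ℝ f x) (hg : DifferentiableAt ℝ g x) (i : Fin 2) :
    pd i (fun y => f y + g y) x = pd i f x + pd i g x := by
  simp [pd, fderiv_fun_add hf hg]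

lemma pd_sub (hf : DifferentiableAt ℝ f x) (hg : DifferentiableAt ℝ g x) (i : Fin 2) :
    pd i (fun y => f y - g y) x = pd i f x - pd i g x := by
  simp [pd, fderiv_fun_sub hf hg]

lemma pd_mul (hf : DifferentiableAt ℝ f x) (hg : DifferentiableAt ℝ g x) (i : Fin 2) :
    pd i (fun y => f y * g y) x = pd i f x * g x + f x * pd i g x := by
  simp [pd, fderiv_fun_mul hf hg, add_comm, mul_comm]

lemma pd_const_mul (hf : DifferentiableAt ℝ f x) (c : ℝ) (i : Fin 2) :
    pd i (fun y => c * f y) x = c * pd i f x := by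
  simp [pd, fderiv_const_mul hf]

lemma pd_sq (hf : DifferentiableAt ℝ f x) (i : Fin 2) :
    pd i (fun y => f y ^ 2) x = 2 * f x * pd i f x := by
  simp only [sq, pd_mul hf hf]
  ring

lemma pd_sum {ι : Type*} (s : Finset ι) {f : ι → E2 → ℝ}
    (hf : ∀ l ∈ s, DifferentiableAt ℝ (f l) x) (i : Fin 2) :
    pd i (fun y => ∑ l ∈ s, f l y) x = ∑ l ∈ s, pd i (f l) x := by
  simp [pd, fderiv_fun_sum hf]

lemma pd_comp {h : ℝ → ℝ} {h' : ℝ} (hh : HasDerivAt h h' (f x)) (hf : DifferentiableAt ℝ f x)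
    (i : Fin 2) : pd i (fun y => h (f y)) x = h' * pd i f x := by
  have hcomp : fderiv ℝ (fun y => h (f y)) x = h' • fderiv ℝ f x :=
    (hh.comp_hasFDerivAt x hf.hasFDerivAt).fderiv
  simp [pd, hcomp]

lemma pd_comm (hf : ContDiff ℝ 2 f) (i l : Fin 2) (x : E2) :
    pd i (pd l f) x = pd l (pd i f) x := by
  have hdf : DifferentiableAt ℝ (fderiv ℝ f) x :=
    (hf.fderiv_right (m := 1) le_rfl).differentiable one_ne_zero x
  have hsnd : ∀ m n : Fin 2, pd m (pd n f) x = fderiv ℝ (fderiv ℝ f) x (bvec m) (bvec n) := by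
    intro m n
    change fderiv ℝ (fun y => fderiv ℝ f y (bvec n)) x (bvec m) = _
    simp [fderiv_clm_apply hdf (differentiableAt_const (bvec n))]
  rw [hsnd, hsnd, (hf.contDiffAt.isSymmSndFDerivAt (by simp)) (bvec i) (bvec l)]

lemma contDiff_pd {m n : WithTop ℕ∞} (hf : ContDiff ℝ n f) (hmn : m + 1 ≤ n) (i : Fin 2) :
    ContDiff ℝ m (pd i f) :=
  (hf.fderiv_right hmn).clm_apply contDiff_const

@[fun_prop]
lemma continuous_pd (hf : ContDiff ℝ 1 f) (i : Fin 2) : Continuous (pd i f) :=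
  (contDiff_pd (m := 0) hf le_rfl i).continuous

@[fun_prop]
lemma differentiable_pd (hf : ContDiff ℝ 2 f) (i : Fin 2) : Differentiable ℝ (pd i f) :=
  (contDiff_pd (m := 1) hf le_rfl i).differentiable one_ne_zero

lemma fderiv_apply_apply {u : E2 → E2} (hu : DifferentiableAt ℝ u x) (v : E2) (k : Fin 2) :
    fderiv ℝ u x v k = fderiv ℝ (fun y => u y k) x v := by
  have hcomp :
      fderiv ℝ (fun y => u y k) x = (EuclideanSpace.proj k : E2 →L[ℝ] ℝ).comp (fderiv ℝ u x) :=
    ((EuclideanSpace.proj k : E2 →L[ℝ] ℝ).hasFDerivAt.comp x hu.hasFDerivAt).fderiv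
  simp [hcomp]

lemma pd_norm_sq_comp {u : E2 → E2} (hu : Differentiable ℝ u) (i : Fin 2) (x : E2) :
    pd i (fun y => ‖u y‖ ^ 2) x = 2 * ∑ k, u x k * pd i (fun y => u y k) x := by
  have huk : ∀ k, DifferentiableAt ℝ (fun y => u y k) x := fun k =>
    ((differentiable_piLp 2).mp hu k) x
  have hnorm : (fun y => ‖u y‖ ^ 2) = fun y => ∑ k, u y k ^ 2 := by
    funext y
    simp [EuclideanSpace.norm_sq_eq]
  rw [hnorm, pd_sum (f := fun k y => u y k ^ 2) _ fun k _ => (huk k).pow 2, Finset.mul_sum]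
  simp only [pd_sq (huk _), mul_assoc]

lemma pd_sum_coord_mul_pd (hf : ContDiff ℝ 2 f) (i : Fin 2) (x : E2) :
    pd i (fun y => ∑ l, y l * pd l f y) x = pd i f x + ∑ l, x l * pd i (pd l f) x := by
  rw [pd_sum _ fun l _ => by fun_prop]
  simp only [pd_mul (differentiable_coord _ x) (differentiable_pd hf _ x), pd_coord,
    Finset.sum_add_distrib, ite_mul, one_mul, zero_mul, Finset.sum_ite_eq', Finset.mem_univ,
    if_true]

end PartialDerivatives

def measurableEquivProdE2 : (ℝ × ℝ) ≃ᵐ E2 :=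
  MeasurableEquiv.finTwoArrow.symm.trans (MeasurableEquiv.toLp 2 (Fin 2 → ℝ))

lemma measurePreserving_measurableEquivProdE2 :
    MeasurePreserving measurableEquivProdE2 volume volume :=
  (PiLp.volume_preserving_toLp (Fin 2)).comp (volume_preserving_finTwoArrow ℝ).symm

lemma Function.Periodic.integral_Ioo_neg_pi_pi {h : ℝ → ℝ} (hh : h.Periodic (2 * π)) :
    ∫ θ in Ioo (-π) π, h θ = ∫ θ in (0)..(2 * π), h θ := by
  rw [← integral_Ioc_eq_integral_Ioo, ← intervalIntegral.integral_of_le (by linarith [pi_pos]),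
    ← zero_add (2 * π), ← hh.intervalIntegral_add_eq (-π) 0]
  ring_nf

lemma integral_ball_eq_integral_polar {f : E2 → ℝ} (hf : Continuous f) {r : ℝ} (hr : 0 ≤ r) :
    ∫ x in Metric.ball (0 : E2) r, f x = ∫ s in (0)..r, ∫ θ in (0)..(2 * π), s * f (cpt s θ) := by
  have hpolar : ∀ p ∈ polarCoord.target, p.1 • (Metric.ball (0 : E2) r).indicator f (cpt p.1 p.2)
      = (Iio r ×ˢ univ).indicator (fun p => p.1 * f (cpt p.1 p.2)) p := by
    rintro ⟨s, θ⟩ ⟨hs, -⟩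
    have hs : 0 < s := hs
    by_cases hsr : s < r
    · rw [indicator_of_mem (by simpa [norm_cpt, abs_of_pos hs] using hsr),
        indicator_of_mem (by simpa using hsr), smul_eq_mul]
    · rw [indicator_of_notMem (by simpa [norm_cpt, abs_of_pos hs] using hsr),
        indicator_of_notMem (by simpa using hsr), smul_zero]
  have htarget : polarCoord.target ∩ Iio r ×ˢ univ = Ioo 0 r ×ˢ Ioo (-π) π := by
    ext ⟨s, θ⟩
    simp [polarCoord_target, and_assoc, and_comm, and_left_comm]
  have hcont : Continuous fun p : ℝ × ℝ => p.1 * f (cpt p.1 p.2) := by fun_prop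
  have hint : IntegrableOn (fun p : ℝ × ℝ => p.1 * f (cpt p.1 p.2)) (Icc 0 r ×ˢ Icc (-π) π) :=
    hcont.continuousOn.integrableOn_compact (isCompact_Icc.prod isCompact_Icc)
  calc ∫ x in Metric.ball (0 : E2) r, f x
      = ∫ p : ℝ × ℝ, (Metric.ball (0 : E2) r).indicator f (measurableEquivProdE2 p) := by
        rw [← integral_indicator measurableSet_ball,
          measurePreserving_measurableEquivProdE2.integral_comp']
    _ = ∫ p in polarCoord.target, (Iio r ×ˢ univ).indicator (fun p => p.1 * f (cpt p.1 p.2)) p := by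
        rw [← integral_comp_polarCoord_symm]
        exact setIntegral_congr_fun polarCoord.open_target.measurableSet hpolar
    _ = ∫ s in Ioo 0 r, ∫ θ in Ioo (-π) π, s * f (cpt s θ) := by
        rw [setIntegral_indicator (measurableSet_Iio.prod MeasurableSet.univ), htarget,
          Measure.volume_eq_prod, setIntegral_prod]
        exact hint.mono_set (prod_mono Ioo_subset_Icc_self Ioo_subset_Icc_self)
    _ = ∫ s in (0)..r, ∫ θ in (0)..(2 * π), s * f (cpt s θ) := by
        rw [intervalIntegral.integral_of_le hr, integral_Ioc_eq_integral_Ioo]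
        refine setIntegral_congr_fun measurableSet_Ioo fun s _ => ?_
        refine Function.Periodic.integral_Ioo_neg_pi_pi fun θ => ?_
        simp only [cpt_add_two_pi]

lemma integral_integral_hasDerivAt_add {P Q P' Q' : ℝ → ℝ → ℝ}
    (hP : ∀ s θ, HasDerivAt (fun s => P s θ) (P' s θ) s) (hQ : ∀ s θ, HasDerivAt (Q s) (Q' s θ) θ)
    (hP' : Continuous (Function.uncurry P')) (hQ' : Continuous (Function.uncurry Q'))
    (a b c d : ℝ) :
    ∫ s in a..b, ∫ θ in c..d, (P' s θ + Q' s θ)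
      = (∫ θ in c..d, (P b θ - P a θ)) + ∫ s in a..b, (Q s d - Q s c) := by
  have hP'θ : ∀ s, Continuous (P' s) := fun s => hP'.comp (Continuous.prodMk_right s)
  have hQ'θ : ∀ s, Continuous (Q' s) := fun s => hQ'.comp (Continuous.prodMk_right s)
  have hswap : ∫ s in a..b, ∫ θ in c..d, P' s θ = ∫ θ in c..d, ∫ s in a..b, P' s θ :=
    intervalIntegral_intervalIntegral_swap
      ((hP'.continuousOn.integrableOn_compact (isCompact_uIcc.prod isCompact_uIcc)).mono_set
        (prod_mono uIoc_subset_uIcc uIoc_subset_uIcc))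
  have hFTC_P : ∀ θ, ∫ s in a..b, P' s θ = P b θ - P a θ := fun θ =>
    intervalIntegral.integral_eq_sub_of_hasDerivAt (fun s _ => hP s θ)
      ((hP'.comp (Continuous.prodMk_left θ)).intervalIntegrable a b)
  have hFTC_Q : ∀ s, ∫ θ in c..d, Q' s θ = Q s d - Q s c := fun s =>
    intervalIntegral.integral_eq_sub_of_hasDerivAt (fun θ _ => hQ s θ)
      ((hQ'θ s).intervalIntegrable c d)
  simp_rw [intervalIntegral.integral_add ((hP'θ _).intervalIntegrable c d)
    ((hQ'θ _).intervalIntegrable c d)]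
  rw [intervalIntegral.integral_add
    ((intervalIntegral.continuous_parametric_intervalIntegral_of_continuous' hP' c d)
      |>.intervalIntegrable a b)
    ((intervalIntegral.continuous_parametric_intervalIntegral_of_continuous' hQ' c d)
      |>.intervalIntegrable a b), hswap]
  simp_rw [hFTC_P, hFTC_Q]

section Divergence

variable {f : E2 → ℝ}

lemma hasDerivAt_comp_cpt_radius (hf : Differentiable ℝ f) (R θ : ℝ) :
    HasDerivAt (fun R => f (cpt R θ)) (cos θ * pd 0 f (cpt R θ) + sin θ * pd 1 f (cpt R θ)) R := by
  refine ((hf _).hasFDerivAt.comp_hasDerivAt R (hasDerivAt_cpt_radius R θ)).congr_deriv ?_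
  simp [fderiv_apply_eq_pd]

lemma hasDerivAt_comp_cpt_angle (hf : Differentiable ℝ f) (R θ : ℝ) :
    HasDerivAt (fun θ => f (cpt R θ))
      (R * (-sin θ * pd 0 f (cpt R θ) + cos θ * pd 1 f (cpt R θ))) θ := by
  refine ((hf _).hasFDerivAt.comp_hasDerivAt θ (hasDerivAt_cpt_angle R θ)).congr_deriv ?_
  simp [fderiv_apply_eq_pd]

theorem integral_ball_divergence {g₀ g₁ : E2 → ℝ} (hg₀ : ContDiff ℝ 1 g₀) (hg₁ : ContDiff ℝ 1 g₁)
    {r : ℝ} (hr : 0 ≤ r) :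
    ∫ x in Metric.ball (0 : E2) r, (pd 0 g₀ x + pd 1 g₁ x)
      = ∫ θ in (0)..(2 * π), r * (g₀ (cpt r θ) * cos θ + g₁ (cpt r θ) * sin θ) := by
  have hd₀ := hg₀.differentiable one_ne_zero
  have hd₁ := hg₁.differentiable one_ne_zero
  -- `P` is `s` times the normal component of `g` and `Q` its tangential component,
  -- so that `∂ₛ P + ∂_θ Q = s * div g` at `cpt s θ`.
  set P : ℝ → ℝ → ℝ := fun s θ => s * (g₀ (cpt s θ) * cos θ + g₁ (cpt s θ) * sin θ)
  set Q : ℝ → ℝ → ℝ := fun s θ => -(g₀ (cpt s θ) * sin θ) + g₁ (cpt s θ) * cos θ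
  set P' : ℝ → ℝ → ℝ := fun s θ => (g₀ (cpt s θ) * cos θ + g₁ (cpt s θ) * sin θ)
    + s * ((cos θ * pd 0 g₀ (cpt s θ) + sin θ * pd 1 g₀ (cpt s θ)) * cos θ
      + (cos θ * pd 0 g₁ (cpt s θ) + sin θ * pd 1 g₁ (cpt s θ)) * sin θ)
  set Q' : ℝ → ℝ → ℝ := fun s θ =>
    -(s * (-sin θ * pd 0 g₀ (cpt s θ) + cos θ * pd 1 g₀ (cpt s θ)) * sin θ
      + g₀ (cpt s θ) * cos θ)
    + (s * (-sin θ * pd 0 g₁ (cpt s θ) + cos θ * pd 1 g₁ (cpt s θ)) * cos θ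
      + g₁ (cpt s θ) * -sin θ)
  have hP : ∀ s θ, HasDerivAt (fun s => P s θ) (P' s θ) s := fun s θ =>
    ((hasDerivAt_id s).mul (((hasDerivAt_comp_cpt_radius hd₀ s θ).mul_const _).add
      ((hasDerivAt_comp_cpt_radius hd₁ s θ).mul_const _))).congr_deriv (by simp [P'])
  have hQ : ∀ s θ, HasDerivAt (Q s) (Q' s θ) θ := fun s θ =>
    (((hasDerivAt_comp_cpt_angle hd₀ s θ).mul (hasDerivAt_sin θ)).neg.add
      ((hasDerivAt_comp_cpt_angle hd₁ s θ).mul (hasDerivAt_cos θ)))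
  have hP' : Continuous (Function.uncurry P') := by
    simp only [P', Function.uncurry_def]; fun_prop
  have hQ' : Continuous (Function.uncurry Q') := by
    simp only [Q', Function.uncurry_def]; fun_prop
  have hsum : ∀ s θ, s * (pd 0 g₀ (cpt s θ) + pd 1 g₁ (cpt s θ)) = P' s θ + Q' s θ := by
    intro s θ
    simp only [P', Q']
    linear_combination (s * (pd 0 g₀ (cpt s θ) + pd 1 g₁ (cpt s θ))) * (sin_sq_add_cos_sq θ).symm
  rw [integral_ball_eq_integral_polar (by fun_prop) hr]
  simp_rw [hsum]
  rw [integral_integral_hasDerivAt_add hP hQ hP' hQ']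
  simp [P, Q, cpt_two_pi]

end Divergence

lemma contDiff_one_of_hasDerivAt {j J : ℝ → ℝ} (hj : Continuous j)
    (hJ : ∀ t, HasDerivAt J (j t) t) : ContDiff ℝ 1 J := by
  rw [contDiff_one_iff_deriv, funext fun t => (hJ t).deriv]
  exact ⟨fun t => (hJ t).differentiableAt, hj⟩

section Pohozaev

variable {u : E2 → E2} {j J : ℝ → ℝ}

lemma pd_gradsq (hu : ContDiff ℝ 2 u) (i : Fin 2) (x : E2) :
    pd i (gradsq u) x
      = ∑ l, ∑ k, 2 * pd l (fun y => u y k) x * pd i (pd l fun y => u y k) x := by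
  have hD : ∀ l k : Fin 2, DifferentiableAt ℝ (pd l fun y => u y k) x := fun l k =>
    differentiable_pd ((contDiff_piLp 2).1 hu k) l x
  change pd i (fun y => ∑ l, ∑ k, pd l (fun z => u z k) y ^ 2) x = _
  rw [pd_sum _ fun l _ => DifferentiableAt.fun_sum fun k _ => (hD l k).fun_pow 2]
  refine Finset.sum_congr rfl fun l _ => ?_
  rw [pd_sum (f := fun k y => pd l (fun z => u z k) y ^ 2) _ fun k _ => (hD l k).pow 2]
  simp only [pd_sq (hD l _)]

lemma pd_comp_one_sub_norm_sq (hu : Differentiable ℝ u) (hJ : ∀ t, HasDerivAt J (j t) t)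
    (i : Fin 2) (x : E2) :
    pd i (fun y => J (1 - ‖u y‖ ^ 2)) x
      = -(2 * j (1 - ‖u x‖ ^ 2) * ∑ k, u x k * pd i (fun y => u y k) x) := by
  have hnorm : DifferentiableAt ℝ (fun y => ‖u y‖ ^ 2) x := (hu x).norm_sq ℝ
  rw [pd_comp (hJ _) ((differentiableAt_const 1).fun_sub hnorm),
    pd_sub (differentiableAt_const 1) hnorm, pd_const, pd_norm_sq_comp hu]
  ring

def pohozaevField (u : E2 → E2) (J : ℝ → ℝ) (i : Fin 2) (x : E2) : ℝ :=
  2 * (∑ k, (∑ l, x l * pd l (fun y => u y k) x) * pd i (fun y => u y k) x)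
    - x i * (gradsq u x + J (1 - ‖u x‖ ^ 2))

lemma contDiff_pohozaevField (hu : ContDiff ℝ 2 u) (hJ : ContDiff ℝ 1 J) (i : Fin 2) :
    ContDiff ℝ 1 (pohozaevField u J i) := by
  have hDu : ∀ l k, ContDiff ℝ 1 (pd l fun y => u y k) := fun l k =>
    contDiff_pd ((contDiff_piLp 2).1 hu k) le_rfl l
  have hnorm : ContDiff ℝ 1 fun y => ‖u y‖ ^ 2 := (hu.of_le (by norm_num)).norm_sq ℝ
  unfold pohozaevField gradsq
  fun_prop

lemma pd_pohozaevField (hu : ContDiff ℝ 2 u) (hJ : ∀ t, HasDerivAt J (j t) t) (i : Fin 2)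
    (x : E2) :
    pd i (pohozaevField u J i) x
      = 2 * ∑ k, ((pd i (fun y => u y k) x + ∑ l, x l * pd i (pd l fun y => u y k) x)
            * pd i (fun y => u y k) x
          + (∑ l, x l * pd l (fun y => u y k) x) * pd i (pd i fun y => u y k) x)
        - ((gradsq u x + J (1 - ‖u x‖ ^ 2))
          + x i * (∑ l, ∑ k, 2 * pd l (fun y => u y k) x * pd i (pd l fun y => u y k) x
            - 2 * j (1 - ‖u x‖ ^ 2) * ∑ k, u x k * pd i (fun y => u y k) x)) := by
  have hgradsq : Differentiable ℝ (gradsq u) := by unfold gradsq; fun_prop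
  have hJd : Differentiable ℝ J := fun t => (hJ t).differentiableAt
  have hnorm : Differentiable ℝ fun y => ‖u y‖ ^ 2 :=
    (hu.differentiable (by norm_num)).norm_sq ℝ
  have hJu : Differentiable ℝ fun y => J (1 - ‖u y‖ ^ 2) := by fun_prop
  change pd i (fun y => 2 * (∑ k, (∑ l, y l * pd l (fun z => u z k) y) * pd i (fun z => u z k) y)
    - y i * (gradsq u y + J (1 - ‖u y‖ ^ 2))) x = _
  rw [pd_sub (by fun_prop) (by fun_prop), pd_const_mul (by fun_prop),
    pd_sum _ fun k _ => by fun_prop, pd_mul (by fun_prop) (by fun_prop),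
    pd_coord, if_pos rfl, one_mul, pd_add (hgradsq x) (hJu x),
    pd_gradsq hu, pd_comp_one_sub_norm_sq (hu.differentiable two_ne_zero) hJ]
  congr 2
  refine Finset.sum_congr rfl fun k _ => ?_
  rw [pd_mul (by fun_prop) (by fun_prop), pd_sum_coord_mul_pd ((contDiff_piLp 2).1 hu k)]

lemma pd_pohozaevField_add (hu : ContDiff ℝ 2 u) (hJ : ∀ t, HasDerivAt J (j t) t)
    (hpde : ∀ x, ∀ k, -(lap (fun y => u y k) x) = u x k * j (1 - ‖u x‖ ^ 2)) (x : E2) :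
    pd 0 (pohozaevField u J 0) x + pd 1 (pohozaevField u J 1) x = -(2 * J (1 - ‖u x‖ ^ 2)) := by
  have hcomm : ∀ k, pd 1 (pd 0 fun y => u y k) x = pd 0 (pd 1 fun y => u y k) x := fun k =>
    pd_comm ((contDiff_piLp 2).1 hu k) 1 0 x
  have hlap : ∀ k, pd 0 (pd 0 fun y => u y k) x + pd 1 (pd 1 fun y => u y k) x
      = -(u x k * j (1 - ‖u x‖ ^ 2)) := by
    intro k
    rw [← hpde x k, lap, Fin.sum_univ_two, neg_neg]
  rw [pd_pohozaevField hu hJ 0, pd_pohozaevField hu hJ 1]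
  simp only [Fin.sum_univ_two, gradsq, hcomm]
  -- by symmetry of the Hessian, all second-order terms except `2 ∑ₖ (x · ∇uₖ) Δuₖ` cancel
  linear_combination
    (2 * (x 0 * pd 0 (fun y => u y 0) x + x 1 * pd 1 (fun y => u y 0) x)) * hlap 0
      + (2 * (x 0 * pd 0 (fun y => u y 1) x + x 1 * pd 1 (fun y => u y 1) x)) * hlap 1

lemma pohozaevField_flux (hu : Differentiable ℝ u) (r θ : ℝ) :
    r * (pohozaevField u J 0 (cpt r θ) * cos θ + pohozaevField u J 1 (cpt r θ) * sin θ)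
      = r ^ 2 * (‖fderiv ℝ u (cpt r θ) (cpt 1 θ)‖ ^ 2 - ‖fderiv ℝ u (cpt r θ) (tv θ)‖ ^ 2
        - J (1 - ‖u (cpt r θ)‖ ^ 2)) := by
  rw [norm_sq_eq_E2 (fderiv ℝ u _ (cpt 1 θ)), norm_sq_eq_E2 (fderiv ℝ u _ (tv θ))]
  simp only [pohozaevField, gradsq, fderiv_apply_apply (hu _),
    fderiv_apply_eq_pd, Fin.sum_univ_two, cpt_apply_zero, cpt_apply_one, tv_apply_zero,
    tv_apply_one]
  linear_combination (-(r ^ 2) * J (1 - ‖u (cpt r θ)‖ ^ 2)) * sin_sq_add_cos_sq θ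

end Pohozaev

theorem stmt7 (u : E2 → E2) (hu : ContDiff ℝ 2 u) (j J : ℝ → ℝ) (hj : Continuous j)
    (hJ : ∀ t, HasDerivAt J (j t) t)
    (hpde : ∀ x, ∀ k, -(lap (fun y => u y k) x) = u x k * j (1 - ‖u x‖ ^ 2))
    (r : ℝ) (hr : 0 < r) :
    (∫ θ in (0:ℝ)..(2 * π), ‖(fderiv ℝ u (cpt r θ)) (cpt 1 θ)‖ ^ 2 * r)
      + (2 / r) * ∫ x in Metric.ball (0 : E2) r, J (1 - ‖u x‖ ^ 2)
    = (∫ θ in (0:ℝ)..(2 * π), ‖(fderiv ℝ u (cpt r θ)) (tv θ)‖ ^ 2 * r)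
      + ∫ θ in (0:ℝ)..(2 * π), J (1 - ‖u (cpt r θ)‖ ^ 2) * r := by
  have hJ₁ : ContDiff ℝ 1 J := contDiff_one_of_hasDerivAt hj hJ
  have hflux := integral_ball_divergence (contDiff_pohozaevField hu hJ₁ 0)
    (contDiff_pohozaevField hu hJ₁ 1) hr.le
  simp_rw [pd_pohozaevField_add hu hJ hpde,
    pohozaevField_flux (hu.differentiable two_ne_zero)] at hflux
  have hDu : Continuous (fderiv ℝ u) := hu.continuous_fderiv two_ne_zero
  have hcont_ν : Continuous fun θ => ‖fderiv ℝ u (cpt r θ) (cpt 1 θ)‖ ^ 2 := by fun_prop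
  have hcont_τ : Continuous fun θ => ‖fderiv ℝ u (cpt r θ) (tv θ)‖ ^ 2 := by fun_prop
  have hcont_J : Continuous fun θ => J (1 - ‖u (cpt r θ)‖ ^ 2) := by
    have hu₀ : Continuous u := hu.continuous
    have hJ₀ : Continuous J := hJ₁.continuous
    fun_prop
  rw [integral_neg, integral_const_mul, intervalIntegral.integral_const_mul,
    intervalIntegral.integral_sub ((hcont_ν.fun_sub hcont_τ).intervalIntegrable _ _)
      (hcont_J.intervalIntegrable _ _),
    intervalIntegral.integral_sub (hcont_ν.intervalIntegrable _ _)
      (hcont_τ.intervalIntegrable _ _)] at hflux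
  simp only [intervalIntegral.integral_mul_const]
  field_simp
  linarith
end
end
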